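/- If P and Q are orthogonal projections on H with P − Q trace class, then the operator QP : range P → range Q (the generalized Toeplitz operator) is Fredholm. -/

import Mathlib

open scoped ComplexConjugate

namespace Pap

noncomputable section

variable {E F : Type*}
  [NormedAddCommGroup E] [InnerProductSpace ℂ E]
  [NormedAddCommGroup F] [InnerProductSpace ℂ F]

/-- Nuclear (= trace-class on Hilbert space) operator: it admits a decomposition
`A x = ∑ cₙ ⟪vₙ, x⟫ uₙ` with `∑ |cₙ| < ∞` and unit-norm vectors `uₙ, vₙ`. -/
def IsTraceClass (A : E →L[ℂ] F) : Prop :=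
  ∃ (c : ℕ → ℂ) (u : ℕ → F) (v : ℕ → E),
    Summable (fun n => ‖c n‖) ∧ (∀ n, ‖u n‖ ≤ 1) ∧ (∀ n, ‖v n‖ ≤ 1) ∧
    ∀ x, A x = ∑' n, c n • ((inner ℂ (v n) x : ℂ) • u n)

/-- Trace norm: the infimum of `∑ |cₙ|` over all such decompositions. -/
def traceNorm (A : E →L[ℂ] F) : ℝ :=
  sInf { t : ℝ | ∃ (c : ℕ → ℂ) (u : ℕ → F) (v : ℕ → E),
    Summable (fun n => ‖c n‖) ∧ (∀ n, ‖u n‖ ≤ 1) ∧ (∀ n, ‖v n‖ ≤ 1) ∧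
    (∀ x, A x = ∑' n, c n • ((inner ℂ (v n) x : ℂ) • u n)) ∧ t = ∑' n, ‖c n‖ }

open Classical in
/-- The trace, computed from a chosen nuclear decomposition. -/
def trace (A : E →L[ℂ] E) : ℂ :=
  if h : IsTraceClass A then
    ∑' n, h.choose n *
      (inner ℂ (h.choose_spec.choose_spec.choose n) (h.choose_spec.choose n) : ℂ)
  else 0

end

end Pap

namespace Pap

/-- The generalized Toeplitz operator `(P,Q) = Q∘P : range P → range Q`. -/
noncomputable def toeplitz {H : Type*} [NormedAddCommGroup H] [InnerProductSpace ℂ H]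
    (P Q : H →L[ℂ] H) : (LinearMap.range (P : H →ₗ[ℂ] H)) →L[ℂ] (LinearMap.range (Q : H →ₗ[ℂ] H)) :=
  (Q.comp (Submodule.subtypeL (LinearMap.range (P : H →ₗ[ℂ] H)))).codRestrict (LinearMap.range (Q : H →ₗ[ℂ] H))
    (fun x => LinearMap.mem_range_self (Q : H →ₗ[ℂ] H) _)

/-- Fredholm: finite-dimensional kernel and cokernel. -/
def IsFredholm {X Y : Type*} [NormedAddCommGroup X] [NormedAddCommGroup Y]
    [NormedSpace ℂ X] [NormedSpace ℂ Y] (T : X →L[ℂ] Y) : Prop :=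
  FiniteDimensional ℂ (LinearMap.ker (T : X →ₗ[ℂ] Y)) ∧ FiniteDimensional ℂ (Y ⧸ LinearMap.range (T : X →ₗ[ℂ] Y))

end Pap

/-!
A trace-class operator is a norm limit of finite-rank operators, so `P - Q = F + R` with `F` of
finite rank and `R` so small that `‖P R‖ < 1` and `‖Q R‖ < 1`. If `x ∈ ran P`, `Q x = 0` and
`F x = 0`, then `x = P (P - Q) x = P R x`, so `x = 0`: the kernel of `QP` embeds into `ran F`.
For `z ∈ ran Q` we have `Q P z = z + Q R z + Q F z`, and `1 + Q R` is invertible by the Neumann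
series, so `ran (QP) + Q (ran F) = ran Q`: the cokernel is finite-dimensional.
-/

namespace Submodule

open LinearMap (ker range)

variable {K V W : Type*} [DivisionRing K] [AddCommGroup V] [Module K V] [AddCommGroup W]
  [Module K W]

theorem finiteDimensional_of_disjoint_ker (p : Submodule K V) (f : V →ₗ[K] W)
    [FiniteDimensional K (range f)] (h : Disjoint p (ker f)) : FiniteDimensional K p := by
  have hinj : Function.Injective (f.domRestrict p) := by
    rw [← LinearMap.ker_eq_bot, LinearMap.ker_domRestrict]
    exact disjoint_iff_comap_eq_bot.mp h
  have : FiniteDimensional K (range (f.domRestrict p)) :=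
    finiteDimensional_of_le (LinearMap.range_domRestrict_le_range f p)
  exact Module.Finite.equiv (LinearEquiv.ofInjective _ hinj).symm

theorem finiteDimensional_quotient_of_sup_eq_top (p q : Submodule K V) [FiniteDimensional K q]
    (h : p ⊔ q = ⊤) : FiniteDimensional K (V ⧸ p) := by
  refine Module.Finite.of_surjective (p.mkQ ∘ₗ q.subtype) ?_
  intro v
  obtain ⟨x, rfl⟩ := p.mkQ_surjective v
  obtain ⟨y, hy, z, hz, rfl⟩ := mem_sup.mp (h ▸ mem_top : x ∈ p ⊔ q)
  refine ⟨⟨z, hz⟩, ?_⟩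
  simpa [Submodule.Quotient.eq] using p.neg_mem hy

end Submodule

namespace ContinuousLinearMap

variable {𝕜 E : Type*} [NontriviallyNormedField 𝕜] [NormedAddCommGroup E] [NormedSpace 𝕜 E]
  {A : E →L[𝕜] E}

theorem exists_add_apply_eq_of_norm_lt_one [CompleteSpace E] (hA : ‖A‖ < 1) (y : E) :
    ∃ z, z + A z = y := by
  let u := Units.oneSub (-A) (by rwa [norm_neg])
  refine ⟨(↑u⁻¹ : E →L[𝕜] E) y, ?_⟩
  simpa [u, sub_eq_add_neg] using congr($(u.mul_inv) y)

theorem eq_zero_of_apply_eq_self_of_norm_lt_one (hA : ‖A‖ < 1) {x : E} (hx : A x = x) :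
    x = 0 := by
  have : ‖x‖ ≤ ‖A‖ * ‖x‖ := by simpa only [hx] using A.le_opNorm x
  exact norm_le_zero_iff.mp (by nlinarith [norm_nonneg x])

end ContinuousLinearMap

namespace Pap

open LinearMap (ker range)
open Submodule

theorem IsTraceClass.exists_eq_finiteRank_add_norm_lt {E F : Type*}
    [NormedAddCommGroup E] [InnerProductSpace ℂ E] [NormedAddCommGroup F] [InnerProductSpace ℂ F]
    [CompleteSpace F] {A : E →L[ℂ] F} (hA : IsTraceClass A) {ε : ℝ} (hε : 0 < ε) :
    ∃ B C : E →L[ℂ] F, FiniteDimensional ℂ (range (B : E →ₗ[ℂ] F)) ∧ ‖C‖ < ε ∧ A = B + C := by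
  obtain ⟨c, u, v, hc, hu, hv, hAx⟩ := hA
  set r : ℕ → E →L[ℂ] F := fun n => c n • (innerSL ℂ (v n)).smulRight (u n)
  have hr : ∀ n, ‖r n‖ ≤ ‖c n‖ := fun n => by
    calc ‖r n‖ = ‖c n‖ * (‖v n‖ * ‖u n‖) := by
          simp only [r, norm_smul, ContinuousLinearMap.norm_smulRight_apply, innerSL_apply_norm]
      _ ≤ ‖c n‖ * (1 * 1) := by gcongr; exacts [hv n, hu n]
      _ = ‖c n‖ := by ring
  have hsum : Summable r := .of_norm_bounded hc hr
  have hA_eq : A = ∑' n, r n := by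
    ext x
    rw [hAx x, ← ContinuousLinearMap.apply_apply (𝕜 := ℂ) x,
      (ContinuousLinearMap.apply ℂ F x).map_tsum hsum]
    simp [r]
  obtain ⟨N, hN⟩ := ((tendsto_sum_nat_add r).norm.eventually_lt_const (by simpa using hε)).exists
  refine ⟨∑ n ∈ Finset.range N, r n, ∑' k, r (k + N), ?_, hN, ?_⟩
  · have : FiniteDimensional ℂ (span ℂ (u '' Finset.range N)) :=
      FiniteDimensional.span_of_finite _ ((Finset.range N).finite_toSet.image u)
    refine finiteDimensional_of_le (S₂ := span ℂ (u '' Finset.range N)) ?_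
    rintro _ ⟨x, rfl⟩
    simp only [r, ContinuousLinearMap.coe_coe, sum_apply, smul_apply,
      ContinuousLinearMap.smulRight_apply]
    exact sum_mem fun n hn => smul_mem _ _ (smul_mem _ _ (subset_span (Set.mem_image_of_mem u hn)))
  · rw [hA_eq, hsum.sum_add_tsum_nat_add]

variable {H : Type*} [NormedAddCommGroup H] [InnerProductSpace ℂ H] {P Q F R : H →L[ℂ] H}

theorem finiteDimensional_ker_toeplitz (hP : IsIdempotentElem P) (hPQ : P - Q = F + R)
    [FiniteDimensional ℂ (range (F : H →ₗ[ℂ] H))] (hR : ‖P ∘L R‖ < 1) :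
    FiniteDimensional ℂ
      (ker (toeplitz P Q : range (P : H →ₗ[ℂ] H) →ₗ[ℂ] range (Q : H →ₗ[ℂ] H))) := by
  let f := (F : H →ₗ[ℂ] H) ∘ₗ (range (P : H →ₗ[ℂ] H)).subtype
  have : FiniteDimensional ℂ (range f) :=
    finiteDimensional_of_le (LinearMap.range_comp_le_range _ _)
  refine finiteDimensional_of_disjoint_ker _ f (disjoint_def.mpr ?_)
  rintro ⟨x, hxP⟩ hTx hxF
  have hPx : P x = x := by
    obtain ⟨w, rfl⟩ := hxP
    exact congr($hP w)
  have hQx : Q x = 0 := congr(Subtype.val $hTx)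
  have hFx : F x = 0 := hxF
  have hx : (P ∘L R) x = x := by
    calc (P ∘L R) x = P (F x + R x) := by simp [hFx]
      _ = P (P x - Q x) := by rw [← add_apply, ← hPQ]; rfl
      _ = x := by rw [hQx, sub_zero, hPx, hPx]
  exact Subtype.ext ((P ∘L R).eq_zero_of_apply_eq_self_of_norm_lt_one hR hx)

theorem finiteDimensional_coker_toeplitz [CompleteSpace H] (hQ : IsIdempotentElem Q)
    (hPQ : P - Q = F + R) [FiniteDimensional ℂ (range (F : H →ₗ[ℂ] H))] (hR : ‖Q ∘L R‖ < 1) :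
    FiniteDimensional ℂ (range (Q : H →ₗ[ℂ] H) ⧸
      range (toeplitz P Q : range (P : H →ₗ[ℂ] H) →ₗ[ℂ] range (Q : H →ₗ[ℂ] H))) := by
  refine finiteDimensional_quotient_of_sup_eq_top _
    (range (toeplitz F Q : range (F : H →ₗ[ℂ] H) →ₗ[ℂ] range (Q : H →ₗ[ℂ] H))) ?_
  refine eq_top_iff.mpr fun ⟨y, hyQ⟩ _ => ?_
  obtain ⟨z, hz⟩ := (Q ∘L R).exists_add_apply_eq_of_norm_lt_one hR y
  have hQz : Q z = z := by
    obtain ⟨w, hw⟩ : z ∈ range (Q : H →ₗ[ℂ] H) := by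
      rw [eq_sub_of_add_eq hz]
      exact sub_mem hyQ (LinearMap.mem_range_self _ _)
    rw [← hw]
    exact congr($hQ w)
  refine mem_sup.mpr ⟨toeplitz P Q ⟨P z, LinearMap.mem_range_self _ _⟩,
    LinearMap.mem_range_self _ _,
    -toeplitz F Q ⟨F z, LinearMap.mem_range_self _ _⟩, neg_mem (LinearMap.mem_range_self _ _),
    Subtype.ext ?_⟩
  have hQQz : Q (Q z) = Q z := congr($hQ z)
  calc Q (P z) + -Q (F z)
      = Q ((P - Q) z - F z) + Q (Q z) := by simp only [sub_apply, map_sub]; abel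
    _ = z + (Q ∘L R) z := by rw [hPQ, hQQz, hQz, add_apply, add_sub_cancel_left, add_comm]; rfl
    _ = y := hz

end Pap

theorem toeplitz_isFredholm_general
    {H : Type*} [NormedAddCommGroup H] [InnerProductSpace ℂ H] [CompleteSpace H]
    (P Q : H →L[ℂ] H)
    (hP2 : P.comp P = P)
    (hQ2 : Q.comp Q = Q)
    (htc : Pap.IsTraceClass (P - Q)) :
    Pap.IsFredholm (Pap.toeplitz P Q) := by
  have hK : 0 < ‖P‖ + ‖Q‖ + 1 := by positivity
  obtain ⟨F, R, _, hR, hPQ⟩ := htc.exists_eq_finiteRank_add_norm_lt (inv_pos.mpr hK)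
  have hKR : (‖P‖ + ‖Q‖ + 1) * ‖R‖ < 1 := (lt_inv_mul_iff₀ hK).mp (by rwa [mul_one])
  have hPR : ‖P ∘L R‖ < 1 := (ContinuousLinearMap.opNorm_comp_le P R).trans_lt
    (by nlinarith [norm_nonneg Q, norm_nonneg R])
  have hQR : ‖Q ∘L R‖ < 1 := (ContinuousLinearMap.opNorm_comp_le Q R).trans_lt
    (by nlinarith [norm_nonneg P, norm_nonneg R])
  exact ⟨Pap.finiteDimensional_ker_toeplitz hP2 hPQ hPR,
    Pap.finiteDimensional_coker_toeplitz hQ2 hPQ hQR⟩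

/-- If `P, Q` are orthogonal projections on a separable Hilbert space `H` with
`P − Q` trace class, then the generalized Toeplitz operator `QP : range P → range Q`
is Fredholm. -/
theorem toeplitz_isFredholm
    {H : Type*} [NormedAddCommGroup H] [InnerProductSpace ℂ H] [CompleteSpace H]
    [TopologicalSpace.SeparableSpace H]
    (P Q : H →L[ℂ] H)
    (hP2 : P.comp P = P) (hPsa : ∀ x y : H, (inner ℂ (P x) y : ℂ) = inner ℂ x (P y))
    (hQ2 : Q.comp Q = Q) (hQsa : ∀ x y : H, (inner ℂ (Q x) y : ℂ) = inner ℂ x (Q y))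
    (htc : Pap.IsTraceClass (P - Q)) :
    Pap.IsFredholm (Pap.toeplitz P Q) :=
  toeplitz_isFredholm_general P Q hP2 hQ2 htc
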